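/- arXiv:2305.10015 — 2 statements merged into one kernel-verified Lean document; each statement's English description precedes it below -/
import Mathlib

section
/- Regression excess-risk transfer inequality (key step in the proof of Theorem 1). Let f : 𝒳 → ℝ be measurable with sup_{x∈𝒳}|f(x)| ≤ M and sup_{x∈𝒳}|μ̂(x)| ≤ M, and assume Φ_s(f), Φ̃_s(f) and Φ_s(μ̂) are finite. Then |Φ_s(f) − Φ̃_s(f)| ≤ 2·M·√(Φ̃_s(f))·√(χ²(P_X ‖ P_X̃)) + 2·√(Φ_s(f))·√(Φ_s(μ̂)) + Φ_s(μ̂). -/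
/-!
Insert `∫ (f − μ̂)² p_X` between the two risks. Replacing `μ̂` by `μ` under the fixed weight `p_X`
changes the integrand by `2 (f − μ)(μ̂ − μ) − (μ̂ − μ)²`, whose integral is controlled by
Cauchy–Schwarz in `L²(p_X)`. Replacing the weight `p_X̃` by `p_X` for the fixed function
`(f − μ̂)²` changes the integral by `∫ (f − μ̂)² (p_X / p_X̃ − 1) p_X̃`; bounding one factor
`|f − μ̂|` by `2M` and applying Cauchy–Schwarz in `L²(p_X̃)` to `|f − μ̂| · |p_X / p_X̃ − 1|` yields
the χ² term.
-/

open MeasureTheory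

section WeightedCauchySchwarz

variable {α : Type*} [MeasurableSpace α] {ν : Measure α} {u v w : α → ℝ}

lemma memLp_two_mul_sqrt (hu : AEStronglyMeasurable u ν) (hw : AEStronglyMeasurable w ν)
    (hw0 : 0 ≤ᵐ[ν] w) (hu2 : Integrable (fun x => u x ^ 2 * w x) ν) :
    MemLp (fun x => u x * √(w x)) 2 ν := by
  refine (memLp_two_iff_integrable_sq
    (hu.mul (Real.continuous_sqrt.comp_aestronglyMeasurable hw))).2 (hu2.congr ?_)
  filter_upwards [hw0] with x hx
  rw [Pi.mul_apply, mul_pow, Real.sq_sqrt hx]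

lemma integrable_mul_mul_of_integrable_sq_mul (hu : AEStronglyMeasurable u ν)
    (hv : AEStronglyMeasurable v ν) (hw : AEStronglyMeasurable w ν) (hw0 : 0 ≤ᵐ[ν] w)
    (hu2 : Integrable (fun x => u x ^ 2 * w x) ν) (hv2 : Integrable (fun x => v x ^ 2 * w x) ν) :
    Integrable (fun x => u x * v x * w x) ν := by
  refine ((memLp_two_mul_sqrt hu hw hw0 hu2).integrable_mul
    (memLp_two_mul_sqrt hv hw hw0 hv2)).congr ?_
  filter_upwards [hw0] with x hx
  simp only [Pi.mul_apply]
  rw [mul_mul_mul_comm, Real.mul_self_sqrt hx]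

lemma integral_abs_mul_abs_mul_le (hu : AEStronglyMeasurable u ν)
    (hv : AEStronglyMeasurable v ν) (hw : AEStronglyMeasurable w ν) (hw0 : 0 ≤ᵐ[ν] w)
    (hu2 : Integrable (fun x => u x ^ 2 * w x) ν) (hv2 : Integrable (fun x => v x ^ 2 * w x) ν) :
    ∫ x, |u x| * |v x| * w x ∂ν ≤ √(∫ x, u x ^ 2 * w x ∂ν) * √(∫ x, v x ^ 2 * w x ∂ν) := by
  have hL2 : ENNReal.ofReal 2 = 2 := by norm_num
  have key := integral_mul_norm_le_Lp_mul_Lq Real.HolderConjugate.two_two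
    (hL2 ▸ memLp_two_mul_sqrt hu hw hw0 hu2) (hL2 ▸ memLp_two_mul_sqrt hv hw hw0 hv2)
  simp only [Real.rpow_two, ← Real.sqrt_eq_rpow] at key
  convert key using 1
  · refine integral_congr_ae ?_
    filter_upwards [hw0] with x hx
    simp only [Real.norm_eq_abs, abs_mul, abs_of_nonneg (Real.sqrt_nonneg _)]
    rw [mul_mul_mul_comm, Real.mul_self_sqrt hx]
  congr 2 <;> refine integral_congr_ae ?_ <;> filter_upwards [hw0] with x hx <;>
    rw [Real.norm_eq_abs, sq_abs, mul_pow, Real.sq_sqrt hx]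

lemma abs_integral_mul_mul_le (hu : AEStronglyMeasurable u ν)
    (hv : AEStronglyMeasurable v ν) (hw : AEStronglyMeasurable w ν) (hw0 : 0 ≤ᵐ[ν] w)
    (hu2 : Integrable (fun x => u x ^ 2 * w x) ν) (hv2 : Integrable (fun x => v x ^ 2 * w x) ν) :
    |∫ x, u x * v x * w x ∂ν| ≤ √(∫ x, u x ^ 2 * w x ∂ν) * √(∫ x, v x ^ 2 * w x ∂ν) := by
  refine abs_integral_le_integral_abs.trans (le_of_eq_of_le (integral_congr_ae ?_)
    (integral_abs_mul_abs_mul_le hu hv hw hw0 hu2 hv2))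
  filter_upwards [hw0] with x hx
  rw [abs_mul, abs_mul, abs_of_nonneg hx]

end WeightedCauchySchwarz

lemma sq_sub_mul_eq {α : Type*} (f g h w : α → ℝ) :
    (fun x => (f x - g x) ^ 2 * w x) = fun x => (f x - h x) ^ 2 * w x
      - 2 * ((f x - h x) * (g x - h x) * w x) + (g x - h x) ^ 2 * w x := by
  funext x; ring

section ExcessRisk

variable {α : Type*} [MeasurableSpace α] {ν : Measure α} {f g h w : α → ℝ}

lemma integrable_sq_sub_mul (hf : AEStronglyMeasurable f ν) (hg : AEStronglyMeasurable g ν)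
    (hh : AEStronglyMeasurable h ν) (hw : AEStronglyMeasurable w ν) (hw0 : 0 ≤ᵐ[ν] w)
    (hfh : Integrable (fun x => (f x - h x) ^ 2 * w x) ν)
    (hgh : Integrable (fun x => (g x - h x) ^ 2 * w x) ν) :
    Integrable (fun x => (f x - g x) ^ 2 * w x) ν := by
  rw [sq_sub_mul_eq f g h w]
  exact (hfh.sub ((integrable_mul_mul_of_integrable_sq_mul (hf.sub hh) (hg.sub hh) hw hw0
    hfh hgh).const_mul 2)).add hgh

lemma abs_integral_sq_sub_mul_sub_le (hf : AEStronglyMeasurable f ν)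
    (hg : AEStronglyMeasurable g ν) (hh : AEStronglyMeasurable h ν)
    (hw : AEStronglyMeasurable w ν) (hw0 : 0 ≤ᵐ[ν] w)
    (hfh : Integrable (fun x => (f x - h x) ^ 2 * w x) ν)
    (hgh : Integrable (fun x => (g x - h x) ^ 2 * w x) ν) :
    |(∫ x, (f x - h x) ^ 2 * w x ∂ν) - ∫ x, (f x - g x) ^ 2 * w x ∂ν| ≤
      2 * √(∫ x, (f x - h x) ^ 2 * w x ∂ν) * √(∫ x, (g x - h x) ^ 2 * w x ∂ν)
        + ∫ x, (g x - h x) ^ 2 * w x ∂ν := by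
  have hcross := integrable_mul_mul_of_integrable_sq_mul (hf.sub hh) (hg.sub hh) hw hw0 hfh hgh
  have hCS := abs_integral_mul_mul_le (hf.sub hh) (hg.sub hh) hw hw0 hfh hgh
  have hC : 0 ≤ ∫ x, (g x - h x) ^ 2 * w x ∂ν :=
    integral_nonneg_of_ae (hw0.mono fun x hx => mul_nonneg (sq_nonneg _) hx)
  simp only [Pi.sub_apply] at hcross hCS
  have hsplit : ∫ x, (f x - g x) ^ 2 * w x ∂ν = (∫ x, (f x - h x) ^ 2 * w x ∂ν)
      - 2 * (∫ x, (f x - h x) * (g x - h x) * w x ∂ν) + ∫ x, (g x - h x) ^ 2 * w x ∂ν := by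
    rw [sq_sub_mul_eq f g h w, integral_add _ hgh, integral_sub hfh (hcross.const_mul 2),
      integral_const_mul]
    exact hfh.sub (hcross.const_mul 2)
  calc _ = |2 * ∫ x, (f x - h x) * (g x - h x) * w x ∂ν - ∫ x, (g x - h x) ^ 2 * w x ∂ν| := by
        rw [hsplit]; ring_nf
    _ ≤ 2 * |∫ x, (f x - h x) * (g x - h x) * w x ∂ν| + ∫ x, (g x - h x) ^ 2 * w x ∂ν := by
        refine (abs_sub _ _).trans ?_
        rw [abs_mul, abs_two, abs_of_nonneg hC]
    _ ≤ _ := by rw [mul_assoc]; gcongr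

lemma abs_integral_sq_mul_sub_sq_mul_le {e p q : α → ℝ} {K : ℝ} (he : AEStronglyMeasurable e ν)
    (hp : AEStronglyMeasurable p ν) (hq : AEStronglyMeasurable q ν) (hK : 0 ≤ K)
    (heK : ∀ᵐ x ∂ν, |e x| ≤ K) (hq0 : 0 ≤ᵐ[ν] q) (hpq : ∀ᵐ x ∂ν, q x = 0 → p x = 0)
    (hep : Integrable (fun x => e x ^ 2 * p x) ν) (heq : Integrable (fun x => e x ^ 2 * q x) ν)
    (hχ : Integrable (fun x => q x * (p x / q x - 1) ^ 2) ν) :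
    |(∫ x, e x ^ 2 * p x ∂ν) - ∫ x, e x ^ 2 * q x ∂ν| ≤
      K * √(∫ x, e x ^ 2 * q x ∂ν) * √(∫ x, q x * (p x / q x - 1) ^ 2 ∂ν) := by
  have hswap : (fun x => q x * (p x / q x - 1) ^ 2) = fun x => (p x / q x - 1) ^ 2 * q x :=
    funext fun x => mul_comm _ _
  rw [hswap] at hχ ⊢
  have hr : AEStronglyMeasurable (fun x => p x / q x - 1) ν :=
    (hp.div₀ hq).sub aestronglyMeasurable_const
  -- where `q x = 0` the ratio is the junk value `0`, harmless because then `p x = 0` too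
  have hratio : ∀ᵐ x ∂ν, p x - q x = (p x / q x - 1) * q x := by
    filter_upwards [hpq] with x hx
    rcases eq_or_ne (q x) 0 with h0 | h0
    · simp [h0, hx h0]
    · field_simp
  have hint : Integrable (fun x => |e x| * |p x / q x - 1| * q x) ν :=
    integrable_mul_mul_of_integrable_sq_mul (continuous_abs.comp_aestronglyMeasurable he)
      (continuous_abs.comp_aestronglyMeasurable hr) hq hq0
      (by simpa only [sq_abs] using heq) (by simpa only [sq_abs] using hχ)
  rw [← integral_sub hep heq]
  calc _ ≤ ∫ x, |e x ^ 2 * p x - e x ^ 2 * q x| ∂ν := abs_integral_le_integral_abs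
    _ ≤ ∫ x, K * (|e x| * |p x / q x - 1| * q x) ∂ν := by
        refine integral_mono_ae (hep.sub heq).abs (hint.const_mul K) ?_
        filter_upwards [heK, hq0, hratio] with x hxK hx0 hx
        calc |e x ^ 2 * p x - e x ^ 2 * q x|
            = |e x| * (|e x| * |p x / q x - 1| * q x) := by
              rw [← mul_sub, hx, abs_mul, abs_mul, abs_of_nonneg hx0, abs_pow]; ring
          _ ≤ K * (|e x| * |p x / q x - 1| * q x) :=
              mul_le_mul_of_nonneg_right hxK (mul_nonneg (by positivity) hx0)
    _ = K * ∫ x, |e x| * |p x / q x - 1| * q x ∂ν := integral_const_mul _ _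
    _ ≤ _ := by
        rw [mul_assoc]
        exact mul_le_mul_of_nonneg_left (integral_abs_mul_abs_mul_le he hr hq hq0 heq hχ) hK

end ExcessRisk

theorem stmt2_general
    {k : ℕ} (𝒳 : Set (Fin k → ℝ)) (h𝒳 : MeasurableSet 𝒳)
    (pX pXt : (Fin k → ℝ) → ℝ)
    (hpX_meas : Measurable pX) (hpXt_meas : Measurable pXt)
    (hpX_nonneg : ∀ x ∈ 𝒳, 0 ≤ pX x) (hpXt_nonneg : ∀ x ∈ 𝒳, 0 ≤ pXt x)
    (hpos : ∀ x ∈ 𝒳, 0 < pX x → 0 < pXt x)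
    (μ μhat f : (Fin k → ℝ) → ℝ)
    (hμ : Measurable μ) (hμhat : Measurable μhat) (hf : Measurable f)
    (M : ℝ) (hfM : ∀ x ∈ 𝒳, |f x| ≤ M) (hμhatM : ∀ x ∈ 𝒳, |μhat x| ≤ M)
    -- finiteness of Φ_s(f), Φ̃_s(f) and Φ_s(μ̂)
    (hi1 : IntegrableOn (fun x => (f x - μ x) ^ 2 * pX x) 𝒳)
    (hi2 : IntegrableOn (fun x => (f x - μhat x) ^ 2 * pXt x) 𝒳)
    (hi3 : IntegrableOn (fun x => (μhat x - μ x) ^ 2 * pX x) 𝒳)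
    -- finiteness of the χ²-divergence
    (hi4 : IntegrableOn (fun x => pXt x * (pX x / pXt x - 1) ^ 2) 𝒳) :
    |(∫ x in 𝒳, (f x - μ x) ^ 2 * pX x) - ∫ x in 𝒳, (f x - μhat x) ^ 2 * pXt x| ≤
      2 * M * Real.sqrt (∫ x in 𝒳, (f x - μhat x) ^ 2 * pXt x)
          * Real.sqrt (∫ x in 𝒳, pXt x * (pX x / pXt x - 1) ^ 2)
        + 2 * Real.sqrt (∫ x in 𝒳, (f x - μ x) ^ 2 * pX x)
            * Real.sqrt (∫ x in 𝒳, (μhat x - μ x) ^ 2 * pX x)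
        + ∫ x in 𝒳, (μhat x - μ x) ^ 2 * pX x := by
  rcases 𝒳.eq_empty_or_nonempty with rfl | ⟨x₀, hx₀⟩
  · simp
  have hM : 0 ≤ M := (abs_nonneg _).trans (hfM x₀ hx₀)
  have hmem : ∀ᵐ x ∂volume.restrict 𝒳, x ∈ 𝒳 := ae_restrict_mem h𝒳
  have hdiff : ∀ᵐ x ∂volume.restrict 𝒳, |f x - μhat x| ≤ 2 * M :=
    hmem.mono fun x hx => (abs_sub _ _).trans (by linarith [hfM x hx, hμhatM x hx])
  have hsupp : ∀ᵐ x ∂volume.restrict 𝒳, pXt x = 0 → pX x = 0 :=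
    hmem.mono fun x hx h0 =>
      le_antisymm (not_lt.1 fun hlt => (hpos x hx hlt).ne' h0) (hpX_nonneg x hx)
  have hbridge := integrable_sq_sub_mul hf.aestronglyMeasurable hμhat.aestronglyMeasurable
    hμ.aestronglyMeasurable hpX_meas.aestronglyMeasurable (hmem.mono hpX_nonneg) hi1 hi3
  have hregression := abs_integral_sq_sub_mul_sub_le hf.aestronglyMeasurable
    hμhat.aestronglyMeasurable hμ.aestronglyMeasurable hpX_meas.aestronglyMeasurable
    (hmem.mono hpX_nonneg) hi1 hi3
  have hshift := abs_integral_sq_mul_sub_sq_mul_le (e := fun x => f x - μhat x)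
    (hf.sub hμhat).aestronglyMeasurable hpX_meas.aestronglyMeasurable
    hpXt_meas.aestronglyMeasurable (by positivity) hdiff (hmem.mono hpXt_nonneg) hsupp hbridge
    hi2 hi4
  calc _ ≤ |(∫ x in 𝒳, (f x - μ x) ^ 2 * pX x) - ∫ x in 𝒳, (f x - μhat x) ^ 2 * pX x|
        + |(∫ x in 𝒳, (f x - μhat x) ^ 2 * pX x) - ∫ x in 𝒳, (f x - μhat x) ^ 2 * pXt x| :=
        abs_sub_le _ _ _
    _ ≤ _ := by linarith

/-- **Regression excess-risk transfer inequality** (key step in the proof of Theorem 1).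
`Φ_s(f) = ∫ (f − μ)² p_X`, `Φ̃_s(f) = ∫ (f − μ̂)² p_X̃`, `Φ_s(μ̂) = ∫ (μ̂ − μ)² p_X`,
and `χ²(P_X ‖ P_X̃) = ∫ p_X̃ (p_X/p_X̃ − 1)²`. -/
theorem stmt2
    {k : ℕ} (𝒳 : Set (Fin k → ℝ)) (h𝒳 : MeasurableSet 𝒳)
    (pX pXt : (Fin k → ℝ) → ℝ)
    (hpX_meas : Measurable pX) (hpXt_meas : Measurable pXt)
    (hpX_nonneg : ∀ x ∈ 𝒳, 0 ≤ pX x) (hpXt_nonneg : ∀ x ∈ 𝒳, 0 ≤ pXt x)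
    (hpX_int : IntegrableOn pX 𝒳) (hpXt_int : IntegrableOn pXt 𝒳)
    (hpX_one : (∫ x in 𝒳, pX x) = 1) (hpXt_one : (∫ x in 𝒳, pXt x) = 1)
    (hpos : ∀ x ∈ 𝒳, 0 < pX x → 0 < pXt x)
    (μ μhat f : (Fin k → ℝ) → ℝ)
    (hμ : Measurable μ) (hμhat : Measurable μhat) (hf : Measurable f)
    (M : ℝ) (hfM : ∀ x ∈ 𝒳, |f x| ≤ M) (hμhatM : ∀ x ∈ 𝒳, |μhat x| ≤ M)
    -- finiteness of Φ_s(f), Φ̃_s(f) and Φ_s(μ̂)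
    (hi1 : IntegrableOn (fun x => (f x - μ x) ^ 2 * pX x) 𝒳)
    (hi2 : IntegrableOn (fun x => (f x - μhat x) ^ 2 * pXt x) 𝒳)
    (hi3 : IntegrableOn (fun x => (μhat x - μ x) ^ 2 * pX x) 𝒳)
    -- finiteness of the χ²-divergence
    (hi4 : IntegrableOn (fun x => pXt x * (pX x / pXt x - 1) ^ 2) 𝒳) :
    |(∫ x in 𝒳, (f x - μ x) ^ 2 * pX x) - ∫ x in 𝒳, (f x - μhat x) ^ 2 * pXt x| ≤
      2 * M * Real.sqrt (∫ x in 𝒳, (f x - μhat x) ^ 2 * pXt x)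
          * Real.sqrt (∫ x in 𝒳, pXt x * (pX x / pXt x - 1) ^ 2)
        + 2 * Real.sqrt (∫ x in 𝒳, (f x - μ x) ^ 2 * pX x)
            * Real.sqrt (∫ x in 𝒳, (μhat x - μ x) ^ 2 * pX x)
        + ∫ x in 𝒳, (μhat x - μ x) ^ 2 * pX x :=
  stmt2_general 𝒳 h𝒳 pX pXt hpX_meas hpXt_meas hpX_nonneg hpXt_nonneg hpos μ μhat f hμ hμhat hf M
    hfM hμhatM hi1 hi2 hi3 hi4
end

section
/- Classification excess-risk transfer inequality (key step in the proof of Theorem 2). For every measurable g : 𝒳 → ℝ, |Φ̃_{0-1}(g) − Φ_{0-1}(g)| ≤ √(Φ̃_{0-1}(g)·χ²(P_X ‖ P_X̃)) + 2·‖η̂ − η‖_{L²(P_X)}·C(g) + Φ_{0-1}(g_{η̂}), where C(g) = √(P(sign(g(X)) ≠ sign(η̂(X) − 1/2))) and g_{η̂}(x) = η̂(x) − 1/2. -/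
/-!
Let `A = 1{sign g ≠ sign(η̂ − 1/2)}`. The difference `Φ̃(g) − Φ(g)` telescopes through
`∫ A |2η̂ − 1| p_X` and `∫ A |2η − 1| p_X`. The first step is a change of density: it equals
`∫ A |2η̂ − 1| (p_X/p_X̃ − 1) p_X̃`, and Cauchy–Schwarz in `L²(p_X̃)` together with
`(A |2η̂ − 1|)² ≤ A |2η̂ − 1|` bounds it by `√(Φ̃(g) χ²)`. The second is Cauchy–Schwarz in
`L²(p_X)`, using `||2η̂ − 1| − |2η − 1|| ≤ 2|η̂ − η|` and `A² ≤ A`. The third is at most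
`Φ(g_η̂)` because sign disagreement satisfies the triangle inequality
`|1{s ≠ s̃} − 1{s ≠ s'}| ≤ 1{s̃ ≠ s'}`.
-/

open MeasureTheory

noncomputable def signDisagree (u v : ℝ) : ℝ := if (0 ≤ u ↔ 0 ≤ v) then 0 else 1

lemma signDisagree_mem_Icc (u v : ℝ) : signDisagree u v ∈ Set.Icc (0 : ℝ) 1 := by
  unfold signDisagree; split_ifs <;> norm_num

lemma abs_signDisagree_sub_signDisagree_le (u v w : ℝ) :
    |signDisagree u v - signDisagree u w| ≤ signDisagree v w := by
  unfold signDisagree; split_ifs <;> simp_all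

lemma abs_two_mul_sub_one_le_one {a : ℝ} (ha : a ∈ Set.Icc (0 : ℝ) 1) : |2 * a - 1| ≤ 1 := by
  rw [abs_le]; constructor <;> linarith [ha.1, ha.2]

lemma mul_abs_two_mul_sub_one_mem_Icc {s a : ℝ} (hs : s ∈ Set.Icc (0 : ℝ) 1)
    (ha : a ∈ Set.Icc (0 : ℝ) 1) : s * |2 * a - 1| ∈ Set.Icc (0 : ℝ) 1 :=
  ⟨mul_nonneg hs.1 (abs_nonneg _), mul_le_one₀ hs.2 (abs_nonneg _) (abs_two_mul_sub_one_le_one ha)⟩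

lemma abs_abs_two_mul_sub_one_sub_le (a b : ℝ) :
    |(|2 * a - 1| - |2 * b - 1|)| ≤ 2 * |a - b| :=
  calc |(|2 * a - 1| - |2 * b - 1|)| ≤ |(2 * a - 1) - (2 * b - 1)| := abs_abs_sub_abs_le_abs_sub _ _
    _ = 2 * |a - b| := by rw [← abs_two, ← abs_mul]; ring_nf

section
variable {α : Type*} [MeasurableSpace α] {μ : Measure α}

@[fun_prop]
lemma Measurable.signDisagree {f g : α → ℝ}
    (hf : Measurable f) (hg : Measurable g) : Measurable fun x => signDisagree (f x) (g x) := by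
  have hle : ∀ {h : α → ℝ}, Measurable h → Measurable fun x => 0 ≤ h x := fun hh =>
    measurableSet_setOfPred.1 (measurableSet_le measurable_const hh)
  exact Measurable.ite ((hle hf).iff (hle hg)).setOf measurable_const measurable_const

/-- `Φ_{0-1}(g)` for the regression function `η` and the feature density `p` with respect to `μ`. -/
noncomputable def excessRisk (μ : Measure α) (p η g : α → ℝ) : ℝ :=
  ∫ x, signDisagree (g x) (η x - 1 / 2) * |2 * η x - 1| * p x ∂μ

lemma excessRisk_eq_integral_ite (μ : Measure α) (p η g : α → ℝ) :
    excessRisk μ p η g =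
      ∫ x, (if (0 ≤ g x) ↔ (0 ≤ η x - 1 / 2) then (0 : ℝ) else |2 * η x - 1|) * p x ∂μ := by
  unfold excessRisk signDisagree
  congr 1 with x
  split_ifs <;> simp

theorem abs_integral_mul_mul_le_sqrt_mul_sqrt {f g w : α → ℝ}
    (hf : AEStronglyMeasurable f μ) (hg : AEStronglyMeasurable g μ)
    (hw : AEStronglyMeasurable w μ) (hw0 : 0 ≤ᵐ[μ] w)
    (hfw : Integrable (fun x => f x ^ 2 * w x) μ) (hgw : Integrable (fun x => g x ^ 2 * w x) μ) :
    |∫ x, f x * g x * w x ∂μ| ≤ √(∫ x, f x ^ 2 * w x ∂μ) * √(∫ x, g x ^ 2 * w x ∂μ) := by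
  have hsqrt : AEStronglyMeasurable (fun x => √(w x)) μ :=
    Real.continuous_sqrt.comp_aestronglyMeasurable hw
  have sq_weighted : ∀ h : α → ℝ, (fun x => (|h x| * √(w x)) ^ 2) =ᵐ[μ] fun x => h x ^ 2 * w x :=
    fun h => by
      filter_upwards [hw0] with x hx
      rw [mul_pow, sq_abs, Real.sq_sqrt hx]
  have memLp_weighted : ∀ h : α → ℝ, AEStronglyMeasurable h μ →
      Integrable (fun x => h x ^ 2 * w x) μ →
      MemLp (fun x => |h x| * √(w x)) (ENNReal.ofReal 2) μ :=
    fun h hh hhw => by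
      have hmeas : AEStronglyMeasurable (fun x => |h x| * √(w x)) μ := hh.norm.mul hsqrt
      rw [ENNReal.ofReal_ofNat, memLp_two_iff_integrable_sq hmeas]
      exact hhw.congr (sq_weighted h).symm
  have holder := integral_mul_le_Lp_mul_Lq_of_nonneg Real.HolderConjugate.two_two
    (ae_of_all _ fun x => by positivity) (ae_of_all _ fun x => by positivity)
    (memLp_weighted f hf hfw) (memLp_weighted g hg hgw)
  simp only [Real.rpow_two, ← Real.sqrt_eq_rpow] at holder
  rw [integral_congr_ae (sq_weighted f), integral_congr_ae (sq_weighted g)] at holder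
  refine abs_integral_le_integral_abs.trans (le_of_eq_of_le (integral_congr_ae ?_) holder)
  filter_upwards [hw0] with x hx
  rw [abs_mul, abs_mul, abs_of_nonneg hx]
  linear_combination -(|f x| * |g x|) * Real.mul_self_sqrt hx

lemma ae_norm_le_one_of_mem_Icc {f : α → ℝ} (hf01 : ∀ᵐ x ∂μ, f x ∈ Set.Icc (0 : ℝ) 1) :
    ∀ᵐ x ∂μ, ‖f x‖ ≤ 1 := by
  filter_upwards [hf01] with x hx
  rw [Real.norm_of_nonneg hx.1]; exact hx.2

lemma integrable_sq_mul_of_norm_le_one {f w : α → ℝ} (hf : AEStronglyMeasurable f μ)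
    (hf1 : ∀ᵐ x ∂μ, ‖f x‖ ≤ 1) (hw : Integrable w μ) :
    Integrable (fun x => f x ^ 2 * w x) μ := by
  refine hw.bdd_mul (c := 1) (hf.pow 2) ?_
  filter_upwards [hf1] with x hx
  rw [norm_pow]; exact pow_le_one₀ (norm_nonneg _) hx

theorem integral_sq_mul_le_integral_mul {f w : α → ℝ} (hf : AEStronglyMeasurable f μ)
    (hf01 : ∀ᵐ x ∂μ, f x ∈ Set.Icc (0 : ℝ) 1) (hw : Integrable w μ) (hw0 : 0 ≤ᵐ[μ] w) :
    ∫ x, f x ^ 2 * w x ∂μ ≤ ∫ x, f x * w x ∂μ := by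
  refine integral_mono_ae (integrable_sq_mul_of_norm_le_one hf (ae_norm_le_one_of_mem_Icc hf01) hw)
    (hw.bdd_mul hf (ae_norm_le_one_of_mem_Icc hf01)) ?_
  filter_upwards [hf01, hw0] with x hx hwx
  exact mul_le_mul_of_nonneg_right (by nlinarith [hx.1, hx.2]) hwx

theorem abs_integral_mul_sub_integral_mul_le_sqrt_chiSq {f p q : α → ℝ}
    (hf : AEStronglyMeasurable f μ) (hf01 : ∀ᵐ x ∂μ, f x ∈ Set.Icc (0 : ℝ) 1)
    (hp : Integrable p μ) (hq : Integrable q μ) (hq0 : 0 ≤ᵐ[μ] q)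
    (hpq : ∀ᵐ x ∂μ, q x = 0 → p x = 0)
    (hχ : Integrable (fun x => q x * (p x / q x - 1) ^ 2) μ) :
    |∫ x, f x * q x ∂μ - ∫ x, f x * p x ∂μ| ≤
      √((∫ x, f x * q x ∂μ) * ∫ x, q x * (p x / q x - 1) ^ 2 ∂μ) := by
  have hbound := ae_norm_le_one_of_mem_Icc hf01
  have hratio : AEStronglyMeasurable (fun x => p x / q x - 1) μ :=
    ((hp.aemeasurable.div hq.aemeasurable).sub aemeasurable_const).aestronglyMeasurable
  have hdiff : ∫ x, f x * q x ∂μ - ∫ x, f x * p x ∂μ =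
      -∫ x, f x * (p x / q x - 1) * q x ∂μ := by
    rw [← integral_sub (hq.bdd_mul hf hbound) (hp.bdd_mul hf hbound), ← integral_neg]
    refine integral_congr_ae ?_
    filter_upwards [hpq] with x hx
    by_cases hqx : q x = 0
    · simp [hqx, hx hqx]
    · field_simp
      ring
  have hχ' : ∫ x, (p x / q x - 1) ^ 2 * q x ∂μ = ∫ x, q x * (p x / q x - 1) ^ 2 ∂μ := by
    simp_rw [mul_comm]
  have hfq0 : 0 ≤ ∫ x, f x * q x ∂μ := integral_nonneg_of_ae <| by
    filter_upwards [hf01, hq0] with x hx hqx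
    exact mul_nonneg hx.1 hqx
  calc |∫ x, f x * q x ∂μ - ∫ x, f x * p x ∂μ|
      = |∫ x, f x * (p x / q x - 1) * q x ∂μ| := by rw [hdiff, abs_neg]
    _ ≤ √(∫ x, f x ^ 2 * q x ∂μ) * √(∫ x, (p x / q x - 1) ^ 2 * q x ∂μ) :=
        abs_integral_mul_mul_le_sqrt_mul_sqrt hf hratio hq.aestronglyMeasurable hq0
          (integrable_sq_mul_of_norm_le_one hf hbound hq)
          (by simpa only [mul_comm] using hχ)
    _ ≤ √(∫ x, f x * q x ∂μ) * √(∫ x, q x * (p x / q x - 1) ^ 2 ∂μ) := by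
        rw [hχ']
        exact mul_le_mul_of_nonneg_right
          (Real.sqrt_le_sqrt (integral_sq_mul_le_integral_mul hf hf01 hq hq0)) (Real.sqrt_nonneg _)
    _ = √((∫ x, f x * q x ∂μ) * ∫ x, q x * (p x / q x - 1) ^ 2 ∂μ) :=
        (Real.sqrt_mul hfq0 _).symm

theorem abs_integral_mul_abs_two_mul_sub_one_sub_le {c u v p : α → ℝ}
    (hc : AEStronglyMeasurable c μ) (hc01 : ∀ᵐ x ∂μ, c x ∈ Set.Icc (0 : ℝ) 1)
    (hu : AEStronglyMeasurable u μ) (hu01 : ∀ᵐ x ∂μ, u x ∈ Set.Icc (0 : ℝ) 1)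
    (hv : AEStronglyMeasurable v μ) (hv01 : ∀ᵐ x ∂μ, v x ∈ Set.Icc (0 : ℝ) 1)
    (hp : Integrable p μ) (hp0 : 0 ≤ᵐ[μ] p) :
    |∫ x, c x * |2 * u x - 1| * p x ∂μ - ∫ x, c x * |2 * v x - 1| * p x ∂μ| ≤
      2 * √(∫ x, (u x - v x) ^ 2 * p x ∂μ) * √(∫ x, c x * p x ∂μ) := by
  have hcw : ∀ {w : α → ℝ}, (∀ᵐ x ∂μ, w x ∈ Set.Icc (0 : ℝ) 1) →
      ∀ᵐ x ∂μ, ‖c x * |2 * w x - 1|‖ ≤ 1 := fun hw01 =>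
    ae_norm_le_one_of_mem_Icc <| by
      filter_upwards [hc01, hw01] with x hcx hwx
      exact mul_abs_two_mul_sub_one_mem_Icc hcx hwx
  set d : α → ℝ := fun x => |2 * u x - 1| - |2 * v x - 1|
  have hd_meas : AEStronglyMeasurable d μ := by fun_prop
  have hsplit : ∫ x, c x * |2 * u x - 1| * p x ∂μ - ∫ x, c x * |2 * v x - 1| * p x ∂μ =
      ∫ x, c x * d x * p x ∂μ := by
    rw [← integral_sub (hp.bdd_mul (by fun_prop) (hcw hu01)) (hp.bdd_mul (by fun_prop) (hcw hv01))]
    exact integral_congr_ae (ae_of_all _ fun x => by ring)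
  have huv_int : Integrable (fun x => (u x - v x) ^ 2 * p x) μ := by
    refine integrable_sq_mul_of_norm_le_one (by fun_prop) ?_ hp
    filter_upwards [hu01, hv01] with x hux hvx
    rw [Real.norm_eq_abs, abs_le]; constructor <;> linarith [hux.1, hux.2, hvx.1, hvx.2]
  have hdp : ∀ᵐ x ∂μ, d x ^ 2 * p x ≤ 4 * ((u x - v x) ^ 2 * p x) := by
    filter_upwards [hp0] with x (hpx : 0 ≤ p x)
    have hsq : |d x| ^ 2 ≤ (2 * |u x - v x|) ^ 2 :=
      pow_le_pow_left₀ (abs_nonneg _) (abs_abs_two_mul_sub_one_sub_le _ _) 2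
    rw [sq_abs, mul_pow, sq_abs] at hsq
    nlinarith [mul_le_mul_of_nonneg_right hsq hpx]
  have hd_int : Integrable (fun x => d x ^ 2 * p x) μ := by
    refine (huv_int.const_mul 4).mono' (by fun_prop) ?_
    filter_upwards [hdp, hp0] with x hx hpx
    rwa [Real.norm_of_nonneg (mul_nonneg (sq_nonneg _) hpx)]
  have hd2 : ∫ x, d x ^ 2 * p x ∂μ ≤ 4 * ∫ x, (u x - v x) ^ 2 * p x ∂μ := by
    rw [← integral_const_mul]
    exact integral_mono_ae hd_int (huv_int.const_mul 4) hdp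
  calc |∫ x, c x * |2 * u x - 1| * p x ∂μ - ∫ x, c x * |2 * v x - 1| * p x ∂μ|
      = |∫ x, c x * d x * p x ∂μ| := by rw [hsplit]
    _ ≤ √(∫ x, c x ^ 2 * p x ∂μ) * √(∫ x, d x ^ 2 * p x ∂μ) :=
        abs_integral_mul_mul_le_sqrt_mul_sqrt hc hd_meas hp.aestronglyMeasurable hp0
          (integrable_sq_mul_of_norm_le_one hc (ae_norm_le_one_of_mem_Icc hc01) hp) hd_int
    _ ≤ √(∫ x, c x * p x ∂μ) * √(4 * ∫ x, (u x - v x) ^ 2 * p x ∂μ) :=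
        mul_le_mul (Real.sqrt_le_sqrt (integral_sq_mul_le_integral_mul hc hc01 hp hp0))
          (Real.sqrt_le_sqrt hd2) (Real.sqrt_nonneg _) (Real.sqrt_nonneg _)
    _ = 2 * √(∫ x, (u x - v x) ^ 2 * p x ∂μ) * √(∫ x, c x * p x ∂μ) := by
        rw [Real.sqrt_mul (by norm_num), show (4 : ℝ) = 2 ^ 2 by norm_num, Real.sqrt_sq two_pos.le]
        ring

theorem abs_excessRisk_sub_excessRisk_le {p q η ηh g : α → ℝ}
    (hp : Integrable p μ) (hp0 : 0 ≤ᵐ[μ] p) (hq : Integrable q μ) (hq0 : 0 ≤ᵐ[μ] q)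
    (hpq : ∀ᵐ x ∂μ, q x = 0 → p x = 0)
    (hη : Measurable η) (hη01 : ∀ᵐ x ∂μ, η x ∈ Set.Icc (0 : ℝ) 1)
    (hηh : Measurable ηh) (hηh01 : ∀ᵐ x ∂μ, ηh x ∈ Set.Icc (0 : ℝ) 1) (hg : Measurable g)
    (hχ : Integrable (fun x => q x * (p x / q x - 1) ^ 2) μ) :
    |excessRisk μ q ηh g - excessRisk μ p η g| ≤
      √(excessRisk μ q ηh g * ∫ x, q x * (p x / q x - 1) ^ 2 ∂μ)
        + 2 * √(∫ x, (ηh x - η x) ^ 2 * p x ∂μ)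
          * √(∫ x, signDisagree (g x) (ηh x - 1 / 2) * p x ∂μ)
        + excessRisk μ p η (fun x => ηh x - 1 / 2) := by
  simp only [excessRisk]
  set A : α → ℝ := fun x => signDisagree (g x) (ηh x - 1 / 2)
  have hA : Measurable A := by fun_prop
  have hA01 : ∀ᵐ x ∂μ, A x ∈ Set.Icc (0 : ℝ) 1 := ae_of_all _ fun x => signDisagree_mem_Icc _ _
  have hAηh01 : ∀ᵐ x ∂μ, A x * |2 * ηh x - 1| ∈ Set.Icc (0 : ℝ) 1 := by
    filter_upwards [hA01, hηh01] with x hAx hx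
    exact mul_abs_two_mul_sub_one_mem_Icc hAx hx
  have transfer := abs_integral_mul_sub_integral_mul_le_sqrt_chiSq
    (f := fun x => A x * |2 * ηh x - 1|) (by fun_prop) hAηh01 hp hq hq0 hpq hχ
  have regression := abs_integral_mul_abs_two_mul_sub_one_sub_le hA.aestronglyMeasurable hA01
    hηh.aestronglyMeasurable hηh01 hη.aestronglyMeasurable hη01 hp hp0
  have labels : |∫ x, A x * |2 * η x - 1| * p x ∂μ -
      ∫ x, signDisagree (g x) (η x - 1 / 2) * |2 * η x - 1| * p x ∂μ| ≤
      ∫ x, signDisagree (ηh x - 1 / 2) (η x - 1 / 2) * |2 * η x - 1| * p x ∂μ := by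
    have risk_int : ∀ u v : α → ℝ, Measurable u → Measurable v →
        Integrable (fun x => signDisagree (u x) (v x) * |2 * η x - 1| * p x) μ := fun u v hu hv =>
      hp.bdd_mul (by fun_prop) <| ae_norm_le_one_of_mem_Icc <| by
        filter_upwards [hη01] with x hx
        exact mul_abs_two_mul_sub_one_mem_Icc (signDisagree_mem_Icc _ _) hx
    rw [← integral_sub (risk_int g (fun x => ηh x - 1 / 2) hg (by fun_prop))
      (risk_int g (fun x => η x - 1 / 2) hg (by fun_prop)), ← Real.norm_eq_abs]
    refine norm_integral_le_of_norm_le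
      (risk_int (fun x => ηh x - 1 / 2) (fun x => η x - 1 / 2) (by fun_prop) (by fun_prop)) ?_
    filter_upwards [hp0] with x (hpx : 0 ≤ p x)
    rw [← sub_mul, ← sub_mul, Real.norm_eq_abs, abs_mul, abs_mul, abs_abs, abs_of_nonneg hpx]
    gcongr
    exact abs_signDisagree_sub_signDisagree_le _ _ _
  linarith [abs_sub_le (∫ x, A x * |2 * ηh x - 1| * q x ∂μ) (∫ x, A x * |2 * ηh x - 1| * p x ∂μ)
      (∫ x, signDisagree (g x) (η x - 1 / 2) * |2 * η x - 1| * p x ∂μ),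
    abs_sub_le (∫ x, A x * |2 * ηh x - 1| * p x ∂μ) (∫ x, A x * |2 * η x - 1| * p x ∂μ)
      (∫ x, signDisagree (g x) (η x - 1 / 2) * |2 * η x - 1| * p x ∂μ)]

end

theorem stmt3_general
    {k : ℕ} (𝒳 : Set (Fin k → ℝ)) (h𝒳 : MeasurableSet 𝒳)
    (pX pXt : (Fin k → ℝ) → ℝ)
    (hpX_nonneg : ∀ x ∈ 𝒳, 0 ≤ pX x) (hpXt_nonneg : ∀ x ∈ 𝒳, 0 ≤ pXt x)
    (hpX_int : IntegrableOn pX 𝒳) (hpXt_int : IntegrableOn pXt 𝒳)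
    (hpos : ∀ x ∈ 𝒳, 0 < pX x → 0 < pXt x)
    (η ηhat : (Fin k → ℝ) → ℝ)
    (hη : Measurable η) (hηhat : Measurable ηhat)
    (hη01 : ∀ x ∈ 𝒳, η x ∈ Set.Icc (0 : ℝ) 1) (hηhat01 : ∀ x ∈ 𝒳, ηhat x ∈ Set.Icc (0 : ℝ) 1)
    -- excess risks and the quantity C(g)
    (Φ01 Φt01 Cg : ((Fin k → ℝ) → ℝ) → ℝ)
    (hΦ01 : ∀ g, Φ01 g =
      ∫ x in 𝒳, (if (0 ≤ g x) ↔ (0 ≤ η x - 1 / 2) then (0 : ℝ) else |2 * η x - 1|) * pX x)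
    (hΦt01 : ∀ g, Φt01 g =
      ∫ x in 𝒳, (if (0 ≤ g x) ↔ (0 ≤ ηhat x - 1 / 2) then (0 : ℝ) else |2 * ηhat x - 1|) * pXt x)
    (hCg : ∀ g, Cg g = Real.sqrt
      (∫ x in 𝒳, (if (0 ≤ g x) ↔ (0 ≤ ηhat x - 1 / 2) then (0 : ℝ) else 1) * pX x))
    -- finiteness of the χ²-divergence
    (chi2 : ℝ)
    (hchi2 : chi2 = ∫ x in 𝒳, pXt x * (pX x / pXt x - 1) ^ 2)
    (hchi2_int : IntegrableOn (fun x => pXt x * (pX x / pXt x - 1) ^ 2) 𝒳) :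
    ∀ g : (Fin k → ℝ) → ℝ, Measurable g →
      |Φt01 g - Φ01 g| ≤
        Real.sqrt (Φt01 g * chi2)
          + 2 * Real.sqrt (∫ x in 𝒳, (ηhat x - η x) ^ 2 * pX x) * Cg g
          + Φ01 (fun x => ηhat x - 1 / 2) := by
  intro g hg
  have on𝒳 : ∀ {P : (Fin k → ℝ) → Prop}, (∀ x ∈ 𝒳, P x) → ∀ᵐ x ∂volume.restrict 𝒳, P x :=
    ae_restrict_of_forall_mem h𝒳
  have hpX_zero : ∀ x ∈ 𝒳, pXt x = 0 → pX x = 0 := fun x hx h0 =>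
    by_contra fun hne => (hpos x hx ((hpX_nonneg x hx).lt_of_ne' hne)).ne' h0
  have transfer := abs_excessRisk_sub_excessRisk_le hpX_int (on𝒳 hpX_nonneg) hpXt_int
    (on𝒳 hpXt_nonneg) (on𝒳 hpX_zero) hη (on𝒳 hη01) hηhat (on𝒳 hηhat01) hg hchi2_int
  simpa only [hΦ01, hΦt01, hCg, hchi2, excessRisk_eq_integral_ite, signDisagree] using transfer

/-- **Classification excess-risk transfer inequality** (key step in the proof of
Theorem 2).  `sign(t) = 1` when `t ≥ 0` and `−1` otherwise;
`Φ_{0-1}(g) = ∫ 1{sign(g) ≠ sign(η − 1/2)} |2η − 1| p_X`,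
`Φ̃_{0-1}(g) = ∫ 1{sign(g) ≠ sign(η̂ − 1/2)} |2η̂ − 1| p_X̃`,
`C(g) = √(P(sign(g(X)) ≠ sign(η̂(X) − 1/2)))` and `g_{η̂} = η̂ − 1/2`. -/
theorem stmt3
    {k : ℕ} (𝒳 : Set (Fin k → ℝ)) (h𝒳 : MeasurableSet 𝒳)
    (pX pXt : (Fin k → ℝ) → ℝ)
    (hpX_meas : Measurable pX) (hpXt_meas : Measurable pXt)
    (hpX_nonneg : ∀ x ∈ 𝒳, 0 ≤ pX x) (hpXt_nonneg : ∀ x ∈ 𝒳, 0 ≤ pXt x)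
    (hpX_int : IntegrableOn pX 𝒳) (hpXt_int : IntegrableOn pXt 𝒳)
    (hpX_one : (∫ x in 𝒳, pX x) = 1) (hpXt_one : (∫ x in 𝒳, pXt x) = 1)
    (hpos : ∀ x ∈ 𝒳, 0 < pX x → 0 < pXt x)
    (η ηhat : (Fin k → ℝ) → ℝ)
    (hη : Measurable η) (hηhat : Measurable ηhat)
    (hη01 : ∀ x ∈ 𝒳, η x ∈ Set.Icc (0 : ℝ) 1) (hηhat01 : ∀ x ∈ 𝒳, ηhat x ∈ Set.Icc (0 : ℝ) 1)
    -- excess risks and the quantity C(g)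
    (Φ01 Φt01 Cg : ((Fin k → ℝ) → ℝ) → ℝ)
    (hΦ01 : ∀ g, Φ01 g =
      ∫ x in 𝒳, (if (0 ≤ g x) ↔ (0 ≤ η x - 1 / 2) then (0 : ℝ) else |2 * η x - 1|) * pX x)
    (hΦt01 : ∀ g, Φt01 g =
      ∫ x in 𝒳, (if (0 ≤ g x) ↔ (0 ≤ ηhat x - 1 / 2) then (0 : ℝ) else |2 * ηhat x - 1|) * pXt x)
    (hCg : ∀ g, Cg g = Real.sqrt
      (∫ x in 𝒳, (if (0 ≤ g x) ↔ (0 ≤ ηhat x - 1 / 2) then (0 : ℝ) else 1) * pX x))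
    -- finiteness of the χ²-divergence
    (chi2 : ℝ)
    (hchi2 : chi2 = ∫ x in 𝒳, pXt x * (pX x / pXt x - 1) ^ 2)
    (hchi2_int : IntegrableOn (fun x => pXt x * (pX x / pXt x - 1) ^ 2) 𝒳) :
    ∀ g : (Fin k → ℝ) → ℝ, Measurable g →
      |Φt01 g - Φ01 g| ≤
        Real.sqrt (Φt01 g * chi2)
          + 2 * Real.sqrt (∫ x in 𝒳, (ηhat x - η x) ^ 2 * pX x) * Cg g
          + Φ01 (fun x => ηhat x - 1 / 2) :=
  stmt3_general 𝒳 h𝒳 pX pXt hpX_nonneg hpXt_nonneg hpX_int hpXt_int hpos η ηhat hη hηhat hη01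
    hηhat01 Φ01 Φt01 Cg hΦ01 hΦt01 hCg chi2 hchi2 hchi2_int
end
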